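/- Partial observability lower bound: under the setup above, for any affine predictor of X_f from X_h, the error covariance satisfies Cov(ε) ⪰ H B Σ Bᵀ Hᵀ + H A Cov(Z̃_h)(H A)ᵀ, assuming X_h, Z̃_h, and U are mutually uncorrelated with Cov(X_h) invertible. -/

import Mathlib

open MeasureTheory ProbabilityTheory Matrix

/-- Entrywise expectation of a random vector. -/
noncomputable def vExp {Ω : Type*} [MeasurableSpace Ω] {α : Type*} (P : Measure Ω)
    (X : Ω → α → ℝ) : α → ℝ :=
  fun i => ∫ ω, X ω i ∂P

/-- Cross-covariance matrix E[(X-EX)(Y-EY)ᵀ]. -/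
noncomputable def crossCov {Ω : Type*} [MeasurableSpace Ω] {α β : Type*} (P : Measure Ω)
    (X : Ω → α → ℝ) (Y : Ω → β → ℝ) : Matrix α β ℝ :=
  Matrix.of fun i j => ∫ ω, (X ω i - vExp P X i) * (Y ω j - vExp P Y j) ∂P

/-- Covariance matrix of a random vector. -/
noncomputable def vCov {Ω : Type*} [MeasurableSpace Ω] {α : Type*} (P : Measure Ω)
    (X : Ω → α → ℝ) : Matrix α α ℝ :=
  crossCov P X X

/-- Second-moment (uncentered) matrix E[X Yᵀ]. -/
noncomputable def secondMoment {Ω : Type*} [MeasurableSpace Ω] {α β : Type*} (P : Measure Ω)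
    (X : Ω → α → ℝ) (Y : Ω → β → ℝ) : Matrix α β ℝ :=
  Matrix.of fun i j => ∫ ω, X ω i * Y ω j ∂P

/-- Squared Euclidean norm of a vector. -/
noncomputable def sqNorm {α : Type*} [Fintype α] (v : α → ℝ) : ℝ :=
  ∑ i, (v i) ^ 2

/-! Writing `X_f = H A (H⁺ X_h + Z̃_h) + H B U`, the prediction error is
`(H A H⁺ - C) X_h + H A Z̃_h + H B U - d`. The three summands are uncorrelated, so its covariance
is `M Cov(X_h) Mᵀ + H A Cov(Z̃_h) (H A)ᵀ + H B Σ (H B)ᵀ` with `M = H A H⁺ - C`, and the first term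
is positive semidefinite. -/

section Covariance

variable {Ω : Type*} [MeasurableSpace Ω] {P : Measure Ω}
variable {α β ι κ : Type*} [Fintype α] [Fintype β]

lemma integrable_mul_of_memLp_two {f g : Ω → ℝ} (hf : MemLp f 2 P) (hg : MemLp g 2 P) :
    Integrable (fun ω => f ω * g ω) P :=
  haveI : ENNReal.HolderTriple 2 2 1 := ⟨by rw [ENNReal.inv_two_add_inv_two, inv_one]⟩
  hf.integrable_mul hg

lemma vExp_add {X Y : Ω → ι → ℝ} (hX : ∀ i, Integrable (fun ω => X ω i) P)
    (hY : ∀ i, Integrable (fun ω => Y ω i) P) :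
    vExp P (fun ω => X ω + Y ω) = vExp P X + vExp P Y :=
  funext fun i => integral_add (hX i) (hY i)

lemma vExp_mulVec {X : Ω → α → ℝ} (hX : ∀ i, Integrable (fun ω => X ω i) P)
    (M : Matrix ι α ℝ) :
    vExp P (fun ω => M *ᵥ X ω) = M *ᵥ vExp P X := by
  funext i
  simp only [vExp, mulVec, dotProduct]
  rw [integral_finsetSum _ fun j _ => (hX j).const_mul _]
  simp only [integral_const_mul]

lemma crossCov_transpose (X : Ω → ι → ℝ) (Y : Ω → κ → ℝ) :
    (crossCov P X Y)ᵀ = crossCov P Y X := by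
  ext i j
  simp only [crossCov, transpose_apply, of_apply, mul_comm]

lemma vCov_sub_const [IsProbabilityMeasure P] {X : Ω → ι → ℝ}
    (hX : ∀ i, Integrable (fun ω => X ω i) P) (c : ι → ℝ) :
    vCov P (fun ω => X ω - c) = vCov P X := by
  have hmean : vExp P (fun ω => X ω - c) = vExp P X - c :=
    funext fun i => by simp [vExp, integral_sub (hX i) (integrable_const (c i))]
  ext i j
  simp only [vCov, crossCov, of_apply, hmean, Pi.sub_apply, sub_sub_sub_cancel_right]

lemma memLp_mulVec {X : Ω → α → ℝ} (hX : ∀ i, MemLp (fun ω => X ω i) 2 P)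
    (M : Matrix ι α ℝ) (i : ι) : MemLp (fun ω => (M *ᵥ X ω) i) 2 P :=
  memLp_finsetSum _ fun j _ => (hX j).const_mul _

section SquareIntegrable

variable [IsFiniteMeasure P]

lemma integrable_centered_mul_centered {X : Ω → ι → ℝ} {Y : Ω → κ → ℝ}
    (hX : ∀ i, MemLp (fun ω => X ω i) 2 P) (hY : ∀ j, MemLp (fun ω => Y ω j) 2 P)
    (i : ι) (j : κ) :
    Integrable (fun ω => (X ω i - vExp P X i) * (Y ω j - vExp P Y j)) P :=
  integrable_mul_of_memLp_two ((hX i).sub (memLp_const _)) ((hY j).sub (memLp_const _))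

lemma crossCov_add_left {X₁ X₂ : Ω → ι → ℝ} {Y : Ω → κ → ℝ}
    (hX₁ : ∀ i, MemLp (fun ω => X₁ ω i) 2 P) (hX₂ : ∀ i, MemLp (fun ω => X₂ ω i) 2 P)
    (hY : ∀ j, MemLp (fun ω => Y ω j) 2 P) :
    crossCov P (fun ω => X₁ ω + X₂ ω) Y = crossCov P X₁ Y + crossCov P X₂ Y := by
  have hmean := vExp_add (fun i => (hX₁ i).integrable one_le_two)
    (fun i => (hX₂ i).integrable one_le_two)
  ext i j
  simp only [crossCov, Matrix.add_apply, of_apply, hmean, Pi.add_apply]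
  rw [← integral_add (integrable_centered_mul_centered hX₁ hY i j)
    (integrable_centered_mul_centered hX₂ hY i j)]
  congr 1 with ω
  ring

lemma crossCov_add_right {X : Ω → ι → ℝ} {Y₁ Y₂ : Ω → κ → ℝ}
    (hX : ∀ i, MemLp (fun ω => X ω i) 2 P) (hY₁ : ∀ j, MemLp (fun ω => Y₁ ω j) 2 P)
    (hY₂ : ∀ j, MemLp (fun ω => Y₂ ω j) 2 P) :
    crossCov P X (fun ω => Y₁ ω + Y₂ ω) = crossCov P X Y₁ + crossCov P X Y₂ := by
  rw [← crossCov_transpose, crossCov_add_left hY₁ hY₂ hX, transpose_add, crossCov_transpose,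
    crossCov_transpose]

lemma crossCov_mulVec_left {X : Ω → α → ℝ} {Y : Ω → κ → ℝ}
    (hX : ∀ i, MemLp (fun ω => X ω i) 2 P) (hY : ∀ j, MemLp (fun ω => Y ω j) 2 P)
    (M : Matrix ι α ℝ) :
    crossCov P (fun ω => M *ᵥ X ω) Y = M * crossCov P X Y := by
  have hmean := vExp_mulVec (fun i => (hX i).integrable one_le_two) M
  have hexpand : ∀ ω i j, ((M *ᵥ X ω) i - (M *ᵥ vExp P X) i) * (Y ω j - vExp P Y j)
      = ∑ k, M i k * ((X ω k - vExp P X k) * (Y ω j - vExp P Y j)) := by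
    intro ω i j
    simp only [mulVec, dotProduct, ← Finset.sum_sub_distrib, ← mul_sub, Finset.sum_mul,
      mul_assoc]
  ext i j
  simp only [crossCov, mul_apply, of_apply, hmean, hexpand]
  rw [integral_finsetSum _ fun k _ => (integrable_centered_mul_centered hX hY k j).const_mul _]
  simp only [integral_const_mul]

lemma crossCov_mulVec_mulVec {X : Ω → α → ℝ} {Y : Ω → β → ℝ}
    (hX : ∀ i, MemLp (fun ω => X ω i) 2 P) (hY : ∀ j, MemLp (fun ω => Y ω j) 2 P)
    (M : Matrix ι α ℝ) (N : Matrix κ β ℝ) :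
    crossCov P (fun ω => M *ᵥ X ω) (fun ω => N *ᵥ Y ω) = M * crossCov P X Y * Nᵀ := by
  rw [crossCov_mulVec_left hX (memLp_mulVec hY N), ← crossCov_transpose,
    crossCov_mulVec_left hY hX, transpose_mul, crossCov_transpose, Matrix.mul_assoc]

lemma vCov_add_of_crossCov_eq_zero {X Y : Ω → ι → ℝ}
    (hX : ∀ i, MemLp (fun ω => X ω i) 2 P) (hY : ∀ i, MemLp (fun ω => Y ω i) 2 P)
    (hXY : crossCov P X Y = 0) :
    vCov P (fun ω => X ω + Y ω) = vCov P X + vCov P Y := by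
  have hYX : crossCov P Y X = 0 := by rw [← crossCov_transpose, hXY, transpose_zero]
  have hXY₂ : ∀ i, MemLp (fun ω => (X ω + Y ω) i) 2 P := fun i => (hX i).add (hY i)
  rw [vCov, crossCov_add_left hX hY hXY₂, crossCov_add_right hX hX hY,
    crossCov_add_right hY hX hY, hXY, hYX, add_zero, zero_add]
  rfl

lemma vCov_mulVec_add_mulVec_add_mulVec {X : Ω → α → ℝ} {Y : Ω → β → ℝ} {W : Ω → κ → ℝ}
    [Fintype κ] (hX : ∀ i, MemLp (fun ω => X ω i) 2 P) (hY : ∀ i, MemLp (fun ω => Y ω i) 2 P)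
    (hW : ∀ i, MemLp (fun ω => W ω i) 2 P) (hXY : crossCov P X Y = 0)
    (hXW : crossCov P X W = 0) (hYW : crossCov P Y W = 0)
    (M : Matrix ι α ℝ) (N : Matrix ι β ℝ) (K : Matrix ι κ ℝ) :
    vCov P (fun ω => M *ᵥ X ω + N *ᵥ Y ω + K *ᵥ W ω) =
      M * vCov P X * Mᵀ + N * vCov P Y * Nᵀ + K * vCov P W * Kᵀ := by
  have hMX := memLp_mulVec hX M
  have hNY := memLp_mulVec hY N
  have hKW := memLp_mulVec hW K
  have hMXNY : ∀ i, MemLp (fun ω => (M *ᵥ X ω + N *ᵥ Y ω) i) 2 P :=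
    fun i => (hMX i).add (hNY i)
  have hcross₁ : crossCov P (fun ω => M *ᵥ X ω) (fun ω => N *ᵥ Y ω) = 0 := by
    rw [crossCov_mulVec_mulVec hX hY, hXY, Matrix.mul_zero, Matrix.zero_mul]
  have hcross₂ : crossCov P (fun ω => M *ᵥ X ω + N *ᵥ Y ω) (fun ω => K *ᵥ W ω) = 0 := by
    rw [crossCov_add_left hMX hNY hKW, crossCov_mulVec_mulVec hX hW, crossCov_mulVec_mulVec hY hW,
      hXW, hYW]
    simp only [Matrix.mul_zero, Matrix.zero_mul, add_zero]
  rw [vCov_add_of_crossCov_eq_zero hMXNY hKW hcross₂,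
    vCov_add_of_crossCov_eq_zero hMX hNY hcross₁]
  simp only [vCov, crossCov_mulVec_mulVec hX hX, crossCov_mulVec_mulVec hY hY,
    crossCov_mulVec_mulVec hW hW]

end SquareIntegrable

end Covariance

lemma prediction_error_eq {n p m : ℕ} (A : Matrix (Fin n) (Fin n) ℝ) (B : Matrix (Fin n) (Fin p) ℝ)
    (H : Matrix (Fin m) (Fin n) ℝ) (Hplus : Matrix (Fin n) (Fin m) ℝ)
    (C : Matrix (Fin m) (Fin m) ℝ) (d xh : Fin m → ℝ) (zt : Fin n → ℝ) (u : Fin p → ℝ) :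
    H *ᵥ (A *ᵥ (Hplus *ᵥ xh + zt) + B *ᵥ u) - (C *ᵥ xh + d) =
      (H * A * Hplus - C) *ᵥ xh + (H * A) *ᵥ zt + (H * B) *ᵥ u - d := by
  simp only [mulVec_add, sub_mulVec, ← mulVec_mulVec]
  abel

theorem stmt13_general {Ω : Type*} [MeasurableSpace Ω] {n p m : ℕ}
    (P : Measure Ω) [IsProbabilityMeasure P]
    (Zh : Ω → Fin n → ℝ) (U : Ω → Fin p → ℝ)
    (A : Matrix (Fin n) (Fin n) ℝ) (B : Matrix (Fin n) (Fin p) ℝ)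
    (H : Matrix (Fin m) (Fin n) ℝ) (Hplus : Matrix (Fin n) (Fin m) ℝ)
    (Sig : Matrix (Fin p) (Fin p) ℝ)
    (hZh2 : ∀ i, MemLp (fun ω => Zh ω i) 2 P)
    (hU2 : ∀ i, MemLp (fun ω => U ω i) 2 P)
    (hcov : vCov P U = Sig)
    (Zf : Ω → Fin n → ℝ) (hZf : ∀ ω, Zf ω = A.mulVec (Zh ω) + B.mulVec (U ω))
    (Xh : Ω → Fin m → ℝ) (hXh : ∀ ω, Xh ω = H.mulVec (Zh ω))
    (Xf : Ω → Fin m → ℝ) (hXfdef : ∀ ω, Xf ω = H.mulVec (Zf ω))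
    (Zt : Ω → Fin n → ℝ) (hZt : ∀ ω, Zt ω = Zh ω - Hplus.mulVec (Xh ω))
    (huncorr₁ : crossCov P Xh Zt = 0)
    (huncorr₂ : crossCov P Xh U = 0)
    (huncorr₃ : crossCov P Zt U = 0)
    (hposdef : (vCov P Xh).PosDef) :
    ∀ (C : Matrix (Fin m) (Fin m) ℝ) (d : Fin m → ℝ),
      (vCov P (fun ω => Xf ω - (C.mulVec (Xh ω) + d)) -
        (H * B * Sig * Bᵀ * Hᵀ + (H * A) * vCov P Zt * (H * A)ᵀ)).PosSemidef := by
  intro C d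
  set M := H * A * Hplus - C
  have hXh2 : ∀ i, MemLp (fun ω => Xh ω i) 2 P := by
    simpa only [hXh] using memLp_mulVec hZh2 H
  have hZt2 : ∀ i, MemLp (fun ω => Zt ω i) 2 P := fun i => by
    simp only [hZt, Pi.sub_apply]
    exact (hZh2 i).sub (memLp_mulVec hXh2 Hplus i)
  have herr : (fun ω => Xf ω - (C *ᵥ Xh ω + d)) =
      fun ω => M *ᵥ Xh ω + (H * A) *ᵥ Zt ω + (H * B) *ᵥ U ω - d := by
    funext ω
    have hZh : Zh ω = Hplus *ᵥ Xh ω + Zt ω := by rw [hZt]; abel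
    rw [hXfdef, hZf, hZh, prediction_error_eq]
  have hcov_err : vCov P (fun ω => Xf ω - (C *ᵥ Xh ω + d)) =
      M * vCov P Xh * Mᵀ + (H * A) * vCov P Zt * (H * A)ᵀ + (H * B) * Sig * (H * B)ᵀ := by
    have hsum : ∀ i, Integrable (fun ω => (M *ᵥ Xh ω + (H * A) *ᵥ Zt ω + (H * B) *ᵥ U ω) i) P :=
      fun i => (((memLp_mulVec hXh2 M i).add (memLp_mulVec hZt2 _ i)).add
        (memLp_mulVec hU2 _ i)).integrable one_le_two
    rw [herr, vCov_sub_const hsum,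
      vCov_mulVec_add_mulVec_add_mulVec hXh2 hZt2 hU2 huncorr₁ huncorr₂ huncorr₃, hcov]
  have hdiff : vCov P (fun ω => Xf ω - (C *ᵥ Xh ω + d)) -
      (H * B * Sig * Bᵀ * Hᵀ + (H * A) * vCov P Zt * (H * A)ᵀ) = M * vCov P Xh * Mᵀ := by
    rw [hcov_err, transpose_mul H B, ← Matrix.mul_assoc (H * B * Sig)]
    abel
  rw [hdiff]
  simpa only [conjTranspose_eq_transpose_of_trivial] using
    hposdef.posSemidef.mul_mul_conjTranspose_same M

/-- Partial observability lower bound: under `Z_f = A Z_h + B U`,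
`X = H Z` with `H H⁺ = I`, `Z_h = H⁺ X_h + Z̃_h`, and `X_h, Z̃_h, U` mutually
uncorrelated with `Cov X_h` invertible, every affine predictor `C X_h + d` of
`X_f` has error covariance `⪰ H B Σ Bᵀ Hᵀ + H A Cov(Z̃_h) (H A)ᵀ`. -/
theorem stmt13 {Ω : Type*} [MeasurableSpace Ω] {n p m : ℕ} (hmn : m < n)
    (P : Measure Ω) [IsProbabilityMeasure P]
    (Zh : Ω → Fin n → ℝ) (U : Ω → Fin p → ℝ)
    (A : Matrix (Fin n) (Fin n) ℝ) (B : Matrix (Fin n) (Fin p) ℝ)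
    (H : Matrix (Fin m) (Fin n) ℝ) (Hplus : Matrix (Fin n) (Fin m) ℝ)
    (hHH : H * Hplus = 1)
    (μv : Fin p → ℝ) (Sig : Matrix (Fin p) (Fin p) ℝ)
    (hZhm : Measurable Zh) (hUm : Measurable U)
    (hZh2 : ∀ i, MemLp (fun ω => Zh ω i) 2 P)
    (hU2 : ∀ i, MemLp (fun ω => U ω i) 2 P)
    (hmean : vExp P U = μv) (hcov : vCov P U = Sig)
    (Zf : Ω → Fin n → ℝ) (hZf : ∀ ω, Zf ω = A.mulVec (Zh ω) + B.mulVec (U ω))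
    (Xh : Ω → Fin m → ℝ) (hXh : ∀ ω, Xh ω = H.mulVec (Zh ω))
    (Xf : Ω → Fin m → ℝ) (hXfdef : ∀ ω, Xf ω = H.mulVec (Zf ω))
    (Zt : Ω → Fin n → ℝ) (hZt : ∀ ω, Zt ω = Zh ω - Hplus.mulVec (Xh ω))
    (hZtmean : vExp P Zt = 0)
    (huncorr₁ : crossCov P Xh Zt = 0)
    (huncorr₂ : crossCov P Xh U = 0)
    (huncorr₃ : crossCov P Zt U = 0)
    (hposdef : (vCov P Xh).PosDef) :
    ∀ (C : Matrix (Fin m) (Fin m) ℝ) (d : Fin m → ℝ),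
      (vCov P (fun ω => Xf ω - (C.mulVec (Xh ω) + d)) -
        (H * B * Sig * Bᵀ * Hᵀ + (H * A) * vCov P Zt * (H * A)ᵀ)).PosSemidef :=
  stmt13_general P Zh U A B H Hplus Sig hZh2 hU2 hcov Zf hZf Xh hXh Xf hXfdef Zt hZt huncorr₁
    huncorr₂ huncorr₃ hposdef
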